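/- arXiv:2403.06272 — 6 statements merged into one kernel-verified Lean document; each statement's English description precedes it below -/
import Mathlib

section
/- Every convex subset C of ℝⁿ is Δ-generated: a subset A ⊆ C is closed in C as soon as σ⁻¹(A) is closed in [0,1] for every continuous map σ : [0,1] → C. -/
/-!
Since `C` is first countable it is sequential, so it suffices to show that `A` contains the limit
`p` of every sequence `u k ∈ A`. The polygonal line through `u 0, u 1, …`, run backwards on
`(0, 1]` so that it passes through `u k` at time `1 / (k + 1)`, and extended by `p` at `0`, is a
path in `C` by convexity; it is continuous at `0` because all segments with late endpoints lie in
any given convex neighbourhood of `p`. Its preimage of `A` is closed and contains the times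
`1 / (k + 1) → 0`, hence contains `0`, i.e. `p ∈ A`.
-/

open Set Filter Topology Function

section PolygonalPath

variable {E : Type*} [AddCommGroup E] [Module ℝ E]

noncomputable def polygonalPath (v : ℤ → E) (s : ℝ) : E :=
  AffineMap.lineMap (v ⌊s⌋) (v (⌊s⌋ + 1)) (Int.fract s)

variable (v : ℤ → E)

@[simp]
theorem polygonalPath_intCast (k : ℤ) : polygonalPath v k = v k := by
  simp [polygonalPath]

theorem polygonalPath_eqOn_Icc (k : ℤ) :
    EqOn (polygonalPath v) (fun s => AffineMap.lineMap (v k) (v (k + 1)) (s - k))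
      (Icc (k : ℝ) (k + 1)) := by
  rintro s ⟨hks, hsk⟩
  rcases hsk.lt_or_eq with hsk | rfl
  · have hfloor : ⌊s⌋ = k := Int.floor_eq_iff.2 ⟨hks, hsk⟩
    simp [polygonalPath, hfloor, Int.fract]
  · simpa using polygonalPath_intCast v (k + 1)

theorem polygonalPath_mem {D : Set E} (hD : Convex ℝ D) {s : ℝ} (h₀ : v ⌊s⌋ ∈ D)
    (h₁ : v (⌊s⌋ + 1) ∈ D) : polygonalPath v s ∈ D :=
  hD.lineMap_mem h₀ h₁ ⟨Int.fract_nonneg s, (Int.fract_lt_one s).le⟩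

variable [TopologicalSpace E]

theorem continuous_polygonalPath [IsTopologicalAddGroup E] [ContinuousSMul ℝ E] :
    Continuous (polygonalPath v) := by
  refine (locallyFinite_Icc_of_tendsto (f := fun k : ℤ => (k : ℝ)) (g := fun k => (k : ℝ) + 1)
    ?_ ?_).continuous (iUnion_Icc_intCast ℝ) (fun _ => isClosed_Icc) fun k => ?_
  · exact tendsto_intCast_atTop_atTop
  · exact tendsto_atBot_add_const_right _ _ (tendsto_intCast_atBot_iff.2 tendsto_id)
  · exact (AffineMap.lineMap_continuous.comp (continuous_sub_right _)).continuousOn.congr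
      (polygonalPath_eqOn_Icc v k)

theorem tendsto_polygonalPath_atTop [LocallyConvexSpace ℝ E] {p : E}
    (hv : Tendsto v atTop (𝓝 p)) : Tendsto (polygonalPath v) atTop (𝓝 p) := by
  refine (LocallyConvexSpace.convex_basis (𝕜 := ℝ) p).tendsto_right_iff.2
    fun S ⟨hS, hSc⟩ => ?_
  obtain ⟨N, hN⟩ := eventually_atTop.1 (hv hS)
  have hfloor {s : ℝ} (hs : N ≤ s) : N ≤ ⌊s⌋ := Int.le_floor.2 hs
  exact eventually_atTop.2 ⟨N, fun s hs =>
    polygonalPath_mem v hSc (hN _ (hfloor hs)) (hN _ ((hfloor hs).trans (Int.le_add_one le_rfl)))⟩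

end PolygonalPath

theorem Convex.exists_path_of_tendsto {E : Type*} [AddCommGroup E] [Module ℝ E]
    [TopologicalSpace E] [IsTopologicalAddGroup E] [ContinuousSMul ℝ E] [LocallyConvexSpace ℝ E]
    {C : Set E} (hC : Convex ℝ C) {u : ℕ → C} {p : C} (hu : Tendsto u atTop (𝓝 p)) :
    ∃ γ : Path p (u 0), ∀ k : ℕ, γ.extend (k + 1)⁻¹ = u k := by
  set v : ℤ → E := fun k => u k.toNat
  have hv : Tendsto v atTop (𝓝 (p : E)) :=
    (continuous_subtype_val.tendsto p).comp
      (hu.comp (tendsto_atTop_atTop.2 fun n => ⟨n, fun k hk => by omega⟩))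
  set f : ℝ → E := update (fun t => polygonalPath v (t⁻¹ - 1)) 0 p
  have hf_mem (t : ℝ) : f t ∈ C := by
    rcases eq_or_ne t 0 with rfl | ht
    · simp [f]
    · simpa [f, ht] using polygonalPath_mem v hC (u _).2 (u _).2
  have hf_cont : ContinuousOn f (Icc 0 1) := by
    refine continuousOn_update_iff.2 ⟨fun t ht => ?_, fun _ => ?_⟩
    · exact ((continuous_polygonalPath v).continuousAt.comp
        ((continuousAt_inv₀ ht.2).sub continuousAt_const)).continuousWithinAt
    · have hsub : Icc (0 : ℝ) 1 \ {0} ⊆ Ioi 0 := fun t ht => ht.1.1.lt_of_ne' ht.2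
      exact (tendsto_polygonalPath_atTop v hv).comp <|
        (tendsto_atTop_add_const_right _ _ tendsto_inv_nhdsGT_zero).mono_left
          (nhdsWithin_mono _ hsub)
  have hf_inv (k : ℕ) : f (k + 1)⁻¹ = u k := by
    have hk : ((k : ℝ) + 1)⁻¹ ≠ 0 := by positivity
    simp only [f, update_of_ne hk, inv_inv, add_sub_cancel_right]
    simpa [v] using polygonalPath_intCast v k
  refine ⟨{ toFun := fun t => ⟨f t, hf_mem t⟩
            continuous_toFun := (continuousOn_iff_continuous_domRestrict.1 hf_cont).subtype_mk _
            source' := Subtype.ext (by simp [f])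
            target' := Subtype.ext (by simpa using hf_inv 0) }, fun k => ?_⟩
  rw [Path.extend_apply _ ⟨by positivity, inv_le_one_of_one_le₀ (by simp)⟩]
  exact Subtype.ext (hf_inv k)

/-- Every convex subset `C` of `ℝⁿ` is Δ-generated: a subset `A ⊆ C` is closed in `C`
(with the subspace topology) as soon as `σ ⁻¹ A` is closed for every continuous
`σ : [0,1] → C`. -/
theorem convex_deltaGenerated {n : ℕ} (C : Set (Fin n → ℝ)) (hC : Convex ℝ C)
    (A : Set C)
    (h : ∀ σ : Set.Icc (0 : ℝ) 1 → C, Continuous σ → IsClosed (σ ⁻¹' A)) :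
    IsClosed A := by
  refine IsSeqClosed.isClosed fun u p hA hup => ?_
  obtain ⟨γ, hγ⟩ := hC.exists_path_of_tendsto hup
  have hclosed : IsClosed (γ.extend ⁻¹' A) := (h γ γ.continuous).preimage continuous_projIcc
  have htend : Tendsto (fun k : ℕ => ((k : ℝ) + 1)⁻¹) atTop (𝓝 0) := by
    simpa using (tendsto_add_atTop_iff_nat 1).2 (tendsto_inv_atTop_nhds_zero_nat (𝕜 := ℝ))
  simpa using hclosed.mem_of_tendsto htend (Eventually.of_forall fun k => by simpa [hγ] using hA k)
end

section
/- Let a cocartesian square of spaces over a poset P (i.e. spaces with a continuous map to P with the Alexandrov topology) be given, with pushout Y, such that the maps X → Y and B → Y are closed maps. Then for any subset Q ⊆ P, restricting each space to the preimage of Q yields again a cocartesian square of topological spaces. -/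
universe u

/-- The Alexandrov topology on a poset: open sets are the upward closed sets
(equivalently, closed sets are the downward closed sets). -/
def alexandrovTop (P : Type*) [Preorder P] : TopologicalSpace P where
  IsOpen U := IsUpperSet U
  isOpen_univ := isUpperSet_univ
  isOpen_inter := fun _ _ h₁ h₂ => h₁.inter h₂
  isOpen_sUnion := fun _ h => isUpperSet_sUnion h

/-- A commuting square of topological spaces is cocartesian (a pushout) if it satisfies
the universal property of pushouts among topological spaces. -/
def IsTopPushout {A B X Y : Type u}
    [TopologicalSpace A] [TopologicalSpace B] [TopologicalSpace X] [TopologicalSpace Y]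
    (fAB : A → B) (fAX : A → X) (fBY : B → Y) (fXY : X → Y) : Prop :=
  Continuous fAB ∧ Continuous fAX ∧ Continuous fBY ∧ Continuous fXY ∧
    (fBY ∘ fAB = fXY ∘ fAX) ∧
    ∀ (W : Type u) (_ : TopologicalSpace W) (u : X → W) (v : B → W),
      Continuous u → Continuous v → u ∘ fAX = v ∘ fAB →
        ∃! w : Y → W, Continuous w ∧ w ∘ fXY = u ∧ w ∘ fBY = v

/-- Given a cocartesian square of `P`-stratified spaces (spaces with a continuous map to the
poset `P` with its Alexandrov topology) such that the two maps into the pushout `Y` are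
closed maps, restricting each space to the preimage of any subset `Q ⊆ P` yields again a
cocartesian square of topological spaces. -/
theorem isTopPushout_restrict_of_isClosedMap {P : Type u} [Preorder P]
    {A B X Y : Type u}
    [TopologicalSpace A] [TopologicalSpace B] [TopologicalSpace X] [TopologicalSpace Y]
    (sA : A → P) (sB : B → P) (sX : X → P) (sY : Y → P)
    (hsA : @Continuous _ _ _ (alexandrovTop P) sA) (hsB : @Continuous _ _ _ (alexandrovTop P) sB)
    (hsX : @Continuous _ _ _ (alexandrovTop P) sX) (hsY : @Continuous _ _ _ (alexandrovTop P) sY)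
    (fAB : A → B) (fAX : A → X) (fBY : B → Y) (fXY : X → Y)
    (hstrB : ∀ a, sB (fAB a) = sA a) (hstrX : ∀ a, sX (fAX a) = sA a)
    (hstrYB : ∀ b, sY (fBY b) = sB b) (hstrYX : ∀ x, sY (fXY x) = sX x)
    (hpo : IsTopPushout fAB fAX fBY fXY)
    (hclB : IsClosedMap fBY) (hclX : IsClosedMap fXY)
    (Q : Set P) :
    IsTopPushout
      (fun a : {a : A // sA a ∈ Q} =>
        (⟨fAB a.1, by rw [hstrB]; exact a.2⟩ : {b : B // sB b ∈ Q}))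
      (fun a : {a : A // sA a ∈ Q} =>
        (⟨fAX a.1, by rw [hstrX]; exact a.2⟩ : {x : X // sX x ∈ Q}))
      (fun b : {b : B // sB b ∈ Q} =>
        (⟨fBY b.1, by rw [hstrYB]; exact b.2⟩ : {y : Y // sY y ∈ Q}))
      (fun x : {x : X // sX x ∈ Q} =>
        (⟨fXY x.1, by rw [hstrYX]; exact x.2⟩ : {y : Y // sY y ∈ Q})) := by

  classical
  obtain ⟨hAB, hAX, hBY, hXY, hcomm, hup⟩ := hpo
  -- The set-theoretic pushout
  set r : (X ⊕ B) → (X ⊕ B) → Prop :=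
    fun p q => ∃ a, p = Sum.inl (fAX a) ∧ q = Sum.inr (fAB a) with hrdef
  let z : Quot r → Y := Quot.lift (Sum.elim fXY fBY) (by
    rintro p q ⟨a, rfl, rfl⟩
    simpa using (congrFun hcomm a).symm)
  obtain ⟨w, ⟨-, hwX, hwB⟩, -⟩ :=
    hup (Quot r) ⊤ (fun x => Quot.mk r (.inl x)) (fun b => Quot.mk r (.inr b))
      continuous_top continuous_top (funext fun a => Quot.sound ⟨a, rfl, rfl⟩)
  obtain ⟨w', -, hw'uniq⟩ := hup Y ⊤ fXY fBY continuous_top continuous_top hcomm.symm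
  have hzw : z ∘ w = id := by
    have h1 : z ∘ w = w' := by
      refine hw'uniq (z ∘ w) ⟨continuous_top, ?_, ?_⟩
      · funext x
        have : w (fXY x) = Quot.mk r (.inl x) := congrFun hwX x
        show z (w (fXY x)) = fXY x
        rw [this]
        rfl
      · funext b
        have : w (fBY b) = Quot.mk r (.inr b) := congrFun hwB b
        show z (w (fBY b)) = fBY b
        rw [this]
        rfl
    have h2 : (id : Y → Y) = w' := hw'uniq id ⟨continuous_top, rfl, rfl⟩
    rw [h1, h2]
  have hsurj : ∀ y : Y, (∃ x, fXY x = y) ∨ (∃ b, fBY b = y) := by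
    intro y
    obtain ⟨p, hp⟩ := Quot.exists_rep (w y)
    have hzy : z (Quot.mk r p) = y := by rw [hp]; exact congrFun hzw y
    cases p with
    | inl x => exact Or.inl ⟨x, hzy⟩
    | inr b => exact Or.inr ⟨b, hzy⟩
  refine ⟨(hAB.comp continuous_subtype_val).subtype_mk _,
    (hAX.comp continuous_subtype_val).subtype_mk _,
    (hBY.comp continuous_subtype_val).subtype_mk _,
    (hXY.comp continuous_subtype_val).subtype_mk _,
    funext fun a => Subtype.ext (congrFun hcomm a.1), ?_⟩
  intro W tW u v hu hv huv
  -- the descended function on the quotient, Option-valued to handle stratum membership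
  set g : (X ⊕ B) → Option W :=
    Sum.elim (fun x => if hx : sX x ∈ Q then some (u ⟨x, hx⟩) else none)
      (fun b => if hb : sB b ∈ Q then some (v ⟨b, hb⟩) else none) with hgdef
  have hg : ∀ p q, r p q → g p = g q := by
    rintro p q ⟨a, rfl, rfl⟩
    show (if hx : sX (fAX a) ∈ Q then some (u ⟨fAX a, hx⟩) else none) =
      (if hb : sB (fAB a) ∈ Q then some (v ⟨fAB a, hb⟩) else none)
    by_cases ha : sA a ∈ Q
    · rw [dif_pos (by rw [hstrX]; exact ha), dif_pos (by rw [hstrB]; exact ha)]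
      exact congrArg some (congrFun huv ⟨a, ha⟩)
    · rw [dif_neg (by rw [hstrX]; exact ha), dif_neg (by rw [hstrB]; exact ha)]
  set h : Quot r → Option W := Quot.lift g hg with hhdef
  have hkeyX : ∀ x : {x : X // sX x ∈ Q}, h (w (fXY x.1)) = some (u x) := by
    intro x
    have hx1 : w (fXY x.1) = Quot.mk r (.inl x.1) := congrFun hwX x.1
    rw [hx1]
    show g (.inl x.1) = some (u x)
    rw [hgdef]
    simp only [Sum.elim_inl]
    rw [dif_pos x.2]
  have hkeyB : ∀ b : {b : B // sB b ∈ Q}, h (w (fBY b.1)) = some (v b) := by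
    intro b
    have hb1 : w (fBY b.1) = Quot.mk r (.inr b.1) := congrFun hwB b.1
    rw [hb1]
    show g (.inr b.1) = some (v b)
    rw [hgdef]
    simp only [Sum.elim_inr]
    rw [dif_pos b.2]
  have hkey : ∀ y : {y : Y // sY y ∈ Q}, ∃ c : W, h (w y.1) = some c := by
    intro y
    rcases hsurj y.1 with ⟨x, hx⟩ | ⟨b, hb⟩
    · have hxQ : sX x ∈ Q := by rw [← hstrYX x, hx]; exact y.2
      exact ⟨u ⟨x, hxQ⟩, by rw [← hx]; exact hkeyX ⟨x, hxQ⟩⟩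
    · have hbQ : sB b ∈ Q := by rw [← hstrYB b, hb]; exact y.2
      exact ⟨v ⟨b, hbQ⟩, by rw [← hb]; exact hkeyB ⟨b, hbQ⟩⟩
  set w0 : {y : Y // sY y ∈ Q} → W :=
    fun y => (h (w y.1)).get (by
      obtain ⟨c, hc⟩ := hkey y
      rw [hc]; rfl) with hw0def
  have hw0X : ∀ x : {x : X // sX x ∈ Q}, w0 ⟨fXY x.1, by rw [hstrYX]; exact x.2⟩ = u x := by
    intro x
    exact Option.get_of_mem _ (Option.mem_def.mpr (hkeyX x))
  have hw0B : ∀ b : {b : B // sB b ∈ Q}, w0 ⟨fBY b.1, by rw [hstrYB]; exact b.2⟩ = v b := by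
    intro b
    exact Option.get_of_mem _ (Option.mem_def.mpr (hkeyB b))
  have hw0cont : Continuous w0 := by
    rw [continuous_iff_isClosed]
    intro F hF
    -- the preimages in the restricted X and B are closed in subspaces
    have hCX : IsClosed ((fun x : {x : X // sX x ∈ Q} => u x) ⁻¹' F) := hF.preimage hu
    have hCB : IsClosed ((fun b : {b : B // sB b ∈ Q} => v b) ⁻¹' F) := hF.preimage hv
    obtain ⟨DX, hDXcl, hDX⟩ := (isClosed_induced_iff.mp hCX)
    obtain ⟨DB, hDBcl, hDB⟩ := (isClosed_induced_iff.mp hCB)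
    rw [isClosed_induced_iff]
    refine ⟨fXY '' DX ∪ fBY '' DB, (hclX DX hDXcl).union (hclB DB hDBcl), ?_⟩
    ext y
    simp only [Set.mem_preimage, Set.mem_union, Set.mem_image]
    constructor
    · rintro (⟨x, hxD, hxy⟩ | ⟨b, hbD, hby⟩)
      · have hxQ : sX x ∈ Q := by rw [← hstrYX x, hxy]; exact y.2
        have : (⟨x, hxQ⟩ : {x : X // sX x ∈ Q}) ∈ Subtype.val ⁻¹' DX := hxD
        rw [hDX] at this
        have hy : y = ⟨fXY x, by rw [hstrYX]; exact hxQ⟩ := Subtype.ext hxy.symm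
        rw [hy, hw0X ⟨x, hxQ⟩]
        exact this
      · have hbQ : sB b ∈ Q := by rw [← hstrYB b, hby]; exact y.2
        have : (⟨b, hbQ⟩ : {b : B // sB b ∈ Q}) ∈ Subtype.val ⁻¹' DB := hbD
        rw [hDB] at this
        have hy : y = ⟨fBY b, by rw [hstrYB]; exact hbQ⟩ := Subtype.ext hby.symm
        rw [hy, hw0B ⟨b, hbQ⟩]
        exact this
    · intro hyF
      rcases hsurj y.1 with ⟨x, hx⟩ | ⟨b, hb⟩
      · have hxQ : sX x ∈ Q := by rw [← hstrYX x, hx]; exact y.2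
        have hy : y = ⟨fXY x, by rw [hstrYX]; exact hxQ⟩ := Subtype.ext hx.symm
        have : u ⟨x, hxQ⟩ ∈ F := by rw [← hw0X ⟨x, hxQ⟩, ← hy]; exact hyF
        have hmem : (⟨x, hxQ⟩ : {x : X // sX x ∈ Q}) ∈ Subtype.val ⁻¹' DX := by
          rw [hDX]; exact this
        exact Or.inl ⟨x, hmem, hx⟩
      · have hbQ : sB b ∈ Q := by rw [← hstrYB b, hb]; exact y.2
        have hy : y = ⟨fBY b, by rw [hstrYB]; exact hbQ⟩ := Subtype.ext hb.symm
        have : v ⟨b, hbQ⟩ ∈ F := by rw [← hw0B ⟨b, hbQ⟩, ← hy]; exact hyF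
        have hmem : (⟨b, hbQ⟩ : {b : B // sB b ∈ Q}) ∈ Subtype.val ⁻¹' DB := by
          rw [hDB]; exact this
        exact Or.inr ⟨b, hmem, hb⟩
  refine ⟨w0, ⟨hw0cont, funext fun x => hw0X x, funext fun b => hw0B b⟩, ?_⟩
  rintro w1 ⟨-, h1X, h1B⟩
  funext y
  rcases hsurj y.1 with ⟨x, hx⟩ | ⟨b, hb⟩
  · have hxQ : sX x ∈ Q := by rw [← hstrYX x, hx]; exact y.2
    have hy : y = ⟨fXY x, by rw [hstrYX]; exact hxQ⟩ := Subtype.ext hx.symm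
    rw [hy, hw0X ⟨x, hxQ⟩]
    exact congrFun h1X ⟨x, hxQ⟩
  · have hbQ : sB b ∈ Q := by rw [← hstrYB b, hb]; exact y.2
    have hy : y = ⟨fBY b, by rw [hstrYB]; exact hbQ⟩ := Subtype.ext hb.symm
    rw [hy, hw0B ⟨b, hbQ⟩]
    exact congrFun h1B ⟨b, hbQ⟩
end

section
/- Let P be a poset with the Alexandrov topology, p ∈ P, and consider a cocartesian square of P-stratified spaces with pushout Y. If Q ⊆ P is open (i.e. upward closed) or closed (i.e. downward closed) in P, then restricting all four spaces to the preimage of Q yields a cocartesian square of topological spaces, with no assumptions on the maps. -/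
/-!
A pushout in `Top` is a pushout of underlying sets whose topology is final for the two maps into
`Y`. The restricted square is cut out by the preimages of `T = sY ⁻¹' Q ⊆ Y`, and both properties
pass to it: the set-theoretic one because maps out of the restricted spaces extend by a junk value
`none` to a compatible pair on the whole square; the topological one because `T` is open or closed
in `Y`, like `Q` in `P`, and an open or closed subspace of a space with the final topology carries
the final topology of the restricted maps.
-/

universe u

open Set

variable {A B X Y W : Type u}

open Classical in
noncomputable def extendByNone (s : Set X) (g : s → W) : X → Option W :=
  fun x => if h : x ∈ s then some (g ⟨x, h⟩) else none

theorem extendByNone_of_mem {s : Set X} (g : s → W) {x : X} (hx : x ∈ s) :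
    extendByNone s g x = some (g ⟨x, hx⟩) :=
  dif_pos hx

theorem extendByNone_injective (s : Set X) :
    Function.Injective (extendByNone s : (s → W) → X → Option W) := by
  intro g₁ g₂ h
  funext x
  have hx := congrFun h x
  rw [extendByNone_of_mem g₁ x.2, extendByNone_of_mem g₂ x.2] at hx
  exact Option.some_injective _ hx

theorem extendByNone_comp {f : X → Y} {s : Set X} {t : Set Y} (hs : f ⁻¹' t = s) (g : t → W) :
    extendByNone t g ∘ f = extendByNone s (g ∘ MapsTo.restrict f s t hs.ge) := by
  subst hs
  rfl

def IsTypePushout (fAB : A → B) (fAX : A → X) (fBY : B → Y) (fXY : X → Y) : Prop :=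
  fBY ∘ fAB = fXY ∘ fAX ∧
    ∀ (W : Type u) (u : X → W) (v : B → W), u ∘ fAX = v ∘ fAB →
      ∃! w : Y → W, w ∘ fXY = u ∧ w ∘ fBY = v

section TypePushout

variable {fAB : A → B} {fAX : A → X} {fBY : B → Y} {fXY : X → Y}

theorem IsTypePushout.mem_range_or_mem_range (h : IsTypePushout fAB fAX fBY fXY) (y : Y) :
    y ∈ range fXY ∨ y ∈ range fBY := by
  have hcover := (h.2 (ULift.{u} Prop) (fun _ => ⟨True⟩) (fun _ => ⟨True⟩) rfl).unique
    (y₁ := fun y => ⟨y ∈ range fXY ∨ y ∈ range fBY⟩) (y₂ := fun _ => ⟨True⟩)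
    ⟨funext fun x => congrArg ULift.up (eq_true (Or.inl ⟨x, rfl⟩)),
      funext fun b => congrArg ULift.up (eq_true (Or.inr ⟨b, rfl⟩))⟩ ⟨rfl, rfl⟩
  exact of_eq_true (congrArg ULift.down (congrFun hcover y))

theorem IsTypePushout.restrict (h : IsTypePushout fAB fAX fBY fXY)
    {SA : Set A} {SB : Set B} {SX : Set X} {SY : Set Y}
    (hA : fAB ⁻¹' SB = SA) (hA' : fAX ⁻¹' SX = SA) (hB : fBY ⁻¹' SY = SB)
    (hX : fXY ⁻¹' SY = SX) :
    IsTypePushout (MapsTo.restrict fAB SA SB hA.ge) (MapsTo.restrict fAX SA SX hA'.ge)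
      (MapsTo.restrict fBY SB SY hB.ge) (MapsTo.restrict fXY SX SY hX.ge) := by
  refine ⟨funext fun a => Subtype.ext (congrFun h.1 a), fun W u v huv => ?_⟩
  have hcompat : extendByNone SX u ∘ fAX = extendByNone SB v ∘ fAB := by
    rw [extendByNone_comp hA', extendByNone_comp hA, huv]
  obtain ⟨w', ⟨hwX, hwB⟩, huniq⟩ := h.2 _ _ _ hcompat
  have hsome : ∀ y : SY, ∃ c, w' y = some c := by
    rintro ⟨y, hy⟩
    rcases h.mem_range_or_mem_range y with ⟨x, rfl⟩ | ⟨b, rfl⟩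
    · exact ⟨_, (congrFun hwX x).trans (extendByNone_of_mem u (hX ▸ hy))⟩
    · exact ⟨_, (congrFun hwB b).trans (extendByNone_of_mem v (hB ▸ hy))⟩
  choose w hw using hsome
  have hwX' : w ∘ MapsTo.restrict fXY SX SY hX.ge = u := funext fun x =>
    Option.some_injective _ <|
      (hw _).symm.trans ((congrFun hwX x.1).trans (extendByNone_of_mem u x.2))
  have hwB' : w ∘ MapsTo.restrict fBY SB SY hB.ge = v := funext fun b =>
    Option.some_injective _ <|
      (hw _).symm.trans ((congrFun hwB b.1).trans (extendByNone_of_mem v b.2))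
  refine ⟨w, ⟨hwX', hwB'⟩, fun w₂ ⟨h₂X, h₂B⟩ => extendByNone_injective SY ?_⟩
  rw [huniq (extendByNone SY w₂) ⟨by rw [extendByNone_comp hX, h₂X], by
      rw [extendByNone_comp hB, h₂B]⟩,
    huniq (extendByNone SY w) ⟨by rw [extendByNone_comp hX, hwX'], by
      rw [extendByNone_comp hB, hwB']⟩]

end TypePushout

section TopPushout

variable [TopologicalSpace A] [TopologicalSpace B] [TopologicalSpace X] [TopologicalSpace Y]
  {fAB : A → B} {fAX : A → X} {fBY : B → Y} {fXY : X → Y}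

theorem IsTopPushout.isTypePushout (h : IsTopPushout fAB fAX fBY fXY) :
    IsTypePushout fAB fAX fBY fXY := by
  obtain ⟨-, -, -, -, hcomm, huniv⟩ := h
  refine ⟨hcomm, fun W u v huv => ?_⟩
  obtain ⟨w, ⟨-, hw⟩, huniq⟩ := huniv W ⊤ u v continuous_top continuous_top huv
  exact ⟨w, hw, fun w' hw' => huniq w' ⟨continuous_top, hw'⟩⟩

theorem IsTopPushout.of_isTypePushout (hAB : Continuous fAB) (hAX : Continuous fAX)
    (hBY : Continuous fBY) (hXY : Continuous fXY) (h : IsTypePushout fAB fAX fBY fXY)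
    (hfinal : ∀ S : Set Y, IsOpen (fXY ⁻¹' S) → IsOpen (fBY ⁻¹' S) → IsOpen S) :
    IsTopPushout fAB fAX fBY fXY := by
  refine ⟨hAB, hAX, hBY, hXY, h.1, fun W _ u v hu hv huv => ?_⟩
  obtain ⟨w, ⟨hwX, hwB⟩, huniq⟩ := h.2 W u v huv
  refine ⟨w, ⟨continuous_def.2 fun O hO => hfinal _ ?_ ?_, hwX, hwB⟩,
    fun w' hw' => huniq w' hw'.2⟩
  · rw [← preimage_comp, hwX]
    exact hO.preimage hu
  · rw [← preimage_comp, hwB]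
    exact hO.preimage hv

theorem IsTopPushout.isOpen_of_isOpen_preimage (h : IsTopPushout fAB fAX fBY fXY) {S : Set Y}
    (hX : IsOpen (fXY ⁻¹' S)) (hB : IsOpen (fBY ⁻¹' S)) : IsOpen S := by
  have ⟨_, _, _, _, hcomm, huniv⟩ := h
  let χ : Y → ULift.{u} Prop := fun y => ⟨y ∈ S⟩
  have hcompat : (χ ∘ fXY) ∘ fAX = (χ ∘ fBY) ∘ fAB := by
    rw [Function.comp_assoc, Function.comp_assoc, hcomm]
  obtain ⟨w, ⟨hwc, hwX, hwB⟩, -⟩ := huniv _ inferInstance _ _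
    (continuous_uliftUp.comp (continuous_Prop.2 hX))
    (continuous_uliftUp.comp (continuous_Prop.2 hB)) hcompat
  have hwχ : w = χ := (h.isTypePushout.2 _ _ _ hcompat).unique ⟨hwX, hwB⟩ ⟨rfl, rfl⟩
  have hχ : Continuous χ := hwχ ▸ hwc
  exact continuous_Prop.1 (continuous_uliftDown.comp hχ)

theorem IsTopPushout.isClosed_of_isClosed_preimage (h : IsTopPushout fAB fAX fBY fXY)
    {S : Set Y} (hX : IsClosed (fXY ⁻¹' S)) (hB : IsClosed (fBY ⁻¹' S)) : IsClosed S :=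
  isOpen_compl_iff.1 (h.isOpen_of_isOpen_preimage hX.isOpen_compl hB.isOpen_compl)

theorem IsTopPushout.isOpen_of_isOpen_restrictPreimage (h : IsTopPushout fAB fAX fBY fXY)
    {T : Set Y} (hT : IsOpen T ∨ IsClosed T) {S : Set T}
    (hX : IsOpen (T.restrictPreimage fXY ⁻¹' S)) (hB : IsOpen (T.restrictPreimage fBY ⁻¹' S)) :
    IsOpen S := by
  have ⟨_, _, hBY, hXY, _⟩ := h
  rcases hT with hT | hT
  · rw [hT.isOpenEmbedding_subtypeVal.isOpen_iff_image_isOpen]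
    refine h.isOpen_of_isOpen_preimage ?_ ?_ <;> rw [← image_val_preimage_restrictPreimage]
    exacts [(hT.preimage hXY).isOpenMap_subtype_val _ hX,
      (hT.preimage hBY).isOpenMap_subtype_val _ hB]
  · rw [← isClosed_compl_iff, hT.isClosedEmbedding_subtypeVal.isClosed_iff_image_isClosed]
    refine h.isClosed_of_isClosed_preimage ?_ ?_ <;> rw [← image_val_preimage_restrictPreimage]
    exacts [(hT.preimage hXY).isClosedMap_subtype_val _ hX.isClosed_compl,
      (hT.preimage hBY).isClosedMap_subtype_val _ hB.isClosed_compl]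

theorem IsTopPushout.restrict (h : IsTopPushout fAB fAX fBY fXY)
    {SA : Set A} {SB : Set B} {SX : Set X} {SY : Set Y} (hSY : IsOpen SY ∨ IsClosed SY)
    (hA : fAB ⁻¹' SB = SA) (hA' : fAX ⁻¹' SX = SA) (hB : fBY ⁻¹' SY = SB)
    (hX : fXY ⁻¹' SY = SX) :
    IsTopPushout (MapsTo.restrict fAB SA SB hA.ge) (MapsTo.restrict fAX SA SX hA'.ge)
      (MapsTo.restrict fBY SB SY hB.ge) (MapsTo.restrict fXY SX SY hX.ge) := by
  have ⟨hAB, hAX, hBY, hXY, _⟩ := h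
  refine .of_isTypePushout (hAB.restrict _) (hAX.restrict _) (hBY.restrict _) (hXY.restrict _)
    (h.isTypePushout.restrict hA hA' hB hX) fun S hSX hSB => ?_
  subst hX hB
  exact h.isOpen_of_isOpen_restrictPreimage hSY hSX hSB

end TopPushout

/-- Given a cocartesian square of `P`-stratified spaces (spaces with a continuous map to the
poset `P` with its Alexandrov topology) and a subset `Q ⊆ P` which is upward closed
(i.e. open) or downward closed (i.e. closed), restricting all four spaces to the
preimage of `Q` yields a cocartesian square of topological spaces, with no assumptions
on the maps. -/
theorem isTopPushout_restrict_of_upper_or_lower {P : Type u} [PartialOrder P]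
    {A B X Y : Type u}
    [TopologicalSpace A] [TopologicalSpace B] [TopologicalSpace X] [TopologicalSpace Y]
    (sA : A → P) (sB : B → P) (sX : X → P) (sY : Y → P)
    (hsY : @Continuous _ _ _ (alexandrovTop P) sY)
    (fAB : A → B) (fAX : A → X) (fBY : B → Y) (fXY : X → Y)
    (hstrB : ∀ a, sB (fAB a) = sA a) (hstrX : ∀ a, sX (fAX a) = sA a)
    (hstrYB : ∀ b, sY (fBY b) = sB b) (hstrYX : ∀ x, sY (fXY x) = sX x)
    (hpo : IsTopPushout fAB fAX fBY fXY)
    (Q : Set P) (hQ : IsUpperSet Q ∨ IsLowerSet Q) :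
    IsTopPushout
      (fun a : {a : A // sA a ∈ Q} =>
        (⟨fAB a.1, by rw [hstrB]; exact a.2⟩ : {b : B // sB b ∈ Q}))
      (fun a : {a : A // sA a ∈ Q} =>
        (⟨fAX a.1, by rw [hstrX]; exact a.2⟩ : {x : X // sX x ∈ Q}))
      (fun b : {b : B // sB b ∈ Q} =>
        (⟨fBY b.1, by rw [hstrYB]; exact b.2⟩ : {y : Y // sY y ∈ Q}))
      (fun x : {x : X // sX x ∈ Q} =>
        (⟨fXY x.1, by rw [hstrYX]; exact x.2⟩ : {y : Y // sY y ∈ Q})) := by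
  let _ := alexandrovTop P
  have hQY : IsOpen (sY ⁻¹' Q) ∨ IsClosed (sY ⁻¹' Q) :=
    hQ.imp (hsY.isOpen_preimage Q) fun hQ => ⟨hsY.isOpen_preimage Qᶜ hQ.compl⟩
  exact hpo.restrict (SA := sA ⁻¹' Q) (SB := sB ⁻¹' Q) (SX := sX ⁻¹' Q) hQY
    (by simp only [preimage_preimage, hstrB]) (by simp only [preimage_preimage, hstrX])
    (by simp only [preimage_preimage, hstrYB]) (by simp only [preimage_preimage, hstrYX])
end

section
/- Let φ_p : [0,1] → [0,1] be continuous with φ_p(s) > 0 for s > 0, and let J = [q_0 ≤ ⋯ ≤ q_n] be a flag in a poset P. Then the φ_p-standard neighborhood {x in the realized stratified simplex : s_{¬≤p}(x) ≤ φ_p(s_{¬<p}(x))·s_p(x)} is a neighborhood (in the usual topological sense) of the p-stratum {x : s(x) = p} of the realized simplex. -/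
noncomputable section
open Finset Classical

/-- Membership in the standard `n`-simplex: nonnegative coordinates summing to `1`. -/
def IsSimplexPt {n : ℕ} (x : Fin (n + 1) → ℝ) : Prop :=
  (∀ i, 0 ≤ x i) ∧ ∑ i, x i = 1

/-- `s_p(x)`: sum of the coordinates of `x` at vertices labeled `p`. -/
def sEq {n : ℕ} {P : Type*} [PartialOrder P] (L : Fin (n + 1) → P) (p : P)
    (x : Fin (n + 1) → ℝ) : ℝ :=
  ∑ i ∈ Finset.univ.filter (fun i => L i = p), x i

/-- `s_{≤p}(x)`: sum of the coordinates of `x` at vertices with label `≤ p`. -/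
def sLe {n : ℕ} {P : Type*} [PartialOrder P] (L : Fin (n + 1) → P) (p : P)
    (x : Fin (n + 1) → ℝ) : ℝ :=
  ∑ i ∈ Finset.univ.filter (fun i => L i ≤ p), x i

/-- `s_{¬≤p}(x)`: sum of the coordinates of `x` at vertices whose label is not `≤ p`. -/
def sNotLe {n : ℕ} {P : Type*} [PartialOrder P] (L : Fin (n + 1) → P) (p : P)
    (x : Fin (n + 1) → ℝ) : ℝ :=
  ∑ i ∈ Finset.univ.filter (fun i => ¬ L i ≤ p), x i

/-- `s_{¬<p}(x)`: sum of the coordinates of `x` at vertices whose label is not `< p`. -/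
def sNotLt {n : ℕ} {P : Type*} [PartialOrder P] (L : Fin (n + 1) → P) (p : P)
    (x : Fin (n + 1) → ℝ) : ℝ :=
  ∑ i ∈ Finset.univ.filter (fun i => ¬ L i < p), x i

/-- The stratification of the realized simplex with monotone vertex labels `L`:
`stratOf L x = max {L i : x i > 0}`, computed as the label of the largest index with
positive coordinate (for `x` in the simplex this is the supremum of the labels of the
positive coordinates, since `L` is monotone). -/
def stratOf {n : ℕ} {P : Type*} [PartialOrder P] (L : Fin (n + 1) → P)
    (x : Fin (n + 1) → ℝ) : P :=
  L ((Finset.univ.filter (fun i => 0 < x i)).sup id)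

/-! The strict inequality `s_{¬≤p} < φ_p(s_{¬<p}) · s_p` cuts out an open subset of the
simplex, since the `s`'s are continuous with `s_{¬<p}` valued in `[0,1]`, where `φ_p` is
continuous. On the `p`-stratum the maximal vertex with positive weight is labeled `p`, so
monotonicity of the flag forces `s_{¬≤p} = 0`, while `s_p` and `s_{¬<p}` are positive; hence
the strict inequality holds there. -/

variable {n : ℕ}

lemma IsSimplexPt.sum_mem_Icc {x : Fin (n + 1) → ℝ} (hx : IsSimplexPt x)
    (s : Finset (Fin (n + 1))) : ∑ i ∈ s, x i ∈ Set.Icc (0 : ℝ) 1 :=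
  ⟨sum_nonneg fun i _ => hx.1 i,
    hx.2 ▸ sum_le_sum_of_subset_of_nonneg (subset_univ s) fun i _ _ => hx.1 i⟩

lemma continuous_simplex_sum (s : Finset (Fin (n + 1))) :
    Continuous fun x : {x : Fin (n + 1) → ℝ // IsSimplexPt x} => ∑ i ∈ s, x.1 i :=
  continuous_finsetSum s fun i _ => (continuous_apply i).comp continuous_subtype_val

lemma IsSimplexPt.pos_sup_support {x : Fin (n + 1) → ℝ} (hx : IsSimplexPt x) :
    0 < x ((univ.filter fun i => 0 < x i).sup id) := by
  obtain ⟨i, -, hi⟩ :=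
    exists_ne_zero_of_sum_ne_zero (hx.2.symm ▸ one_ne_zero : ∑ i, x i ≠ 0)
  have hne : (univ.filter fun i => 0 < x i).Nonempty :=
    ⟨i, mem_filter.2 ⟨mem_univ i, (hx.1 i).lt_of_ne' hi⟩⟩
  obtain ⟨m, hm, hsup⟩ := exists_mem_eq_sup _ hne id
  exact hsup ▸ (mem_filter.1 hm).2

section Stratum

variable {P : Type*} [PartialOrder P] {L : Fin (n + 1) → P} {p : P} {x : Fin (n + 1) → ℝ}

lemma sNotLe_eq_zero_of_stratOf_eq (hL : Monotone L) (hx : ∀ i, 0 ≤ x i)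
    (h : stratOf L x = p) : sNotLe L p x = 0 := by
  refine sum_eq_zero fun i hi => le_antisymm (not_lt.1 fun hpos => ?_) (hx i)
  have hle : i ≤ (univ.filter fun i => 0 < x i).sup id :=
    le_sup (f := id) (mem_filter.2 ⟨mem_univ i, hpos⟩)
  exact (mem_filter.1 hi).2 (h ▸ hL hle)

lemma IsSimplexPt.sum_pos_of_stratOf_eq (hx : IsSimplexPt x) (h : stratOf L x = p)
    {s : Finset (Fin (n + 1))} (hs : ∀ i, L i = p → i ∈ s) : 0 < ∑ i ∈ s, x i :=
  sum_pos' (fun i _ => hx.1 i) ⟨_, hs _ h, hx.pos_sup_support⟩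

end Stratum

theorem phiStandardNhd_mem_nhdsSet_general {n : ℕ} {P : Type*} [PartialOrder P]
    (L : Fin (n + 1) → P) (hL : Monotone L) (p : P) (φ : ℝ → ℝ)
    (hφc : ContinuousOn φ (Set.Icc 0 1))
    (hφpos : ∀ s ∈ Set.Icc (0 : ℝ) 1, 0 < s → 0 < φ s) :
    {x : {x : Fin (n + 1) → ℝ // IsSimplexPt x} |
        sNotLe L p x.1 ≤ φ (sNotLt L p x.1) * sEq L p x.1} ∈
      nhdsSet {x : {x : Fin (n + 1) → ℝ // IsSimplexPt x} | stratOf L x.1 = p} := by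
  have hφ_comp : Continuous fun x : {x : Fin (n + 1) → ℝ // IsSimplexPt x} =>
      φ (sNotLt L p x.1) :=
    hφc.comp_continuous (continuous_simplex_sum _) fun x => x.2.sum_mem_Icc _
  have hopen : IsOpen {x : {x : Fin (n + 1) → ℝ // IsSimplexPt x} |
      sNotLe L p x.1 < φ (sNotLt L p x.1) * sEq L p x.1} :=
    isOpen_lt (continuous_simplex_sum _) (hφ_comp.mul (continuous_simplex_sum _))
  refine Filter.mem_of_superset (hopen.mem_nhdsSet.2 fun x hx => ?_)
    (Set.ofPred_subset_ofPred.2 fun _ => le_of_lt)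
  have hEq : 0 < sEq L p x.1 :=
    x.2.sum_pos_of_stratOf_eq hx fun i hi => mem_filter.2 ⟨mem_univ i, hi⟩
  have hNotLt : 0 < sNotLt L p x.1 :=
    x.2.sum_pos_of_stratOf_eq hx fun i hi => mem_filter.2 ⟨mem_univ i, hi.not_lt⟩
  show sNotLe L p x.1 < φ (sNotLt L p x.1) * sEq L p x.1
  rw [sNotLe_eq_zero_of_stratOf_eq hL x.2.1 hx]
  exact mul_pos (hφpos _ (x.2.sum_mem_Icc _) hNotLt) hEq

/-- Let `φ_p : [0,1] → [0,1]` be continuous with `φ_p(s) > 0` for `s > 0`, and let `L`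
describe a flag `[q_0 ≤ ⋯ ≤ q_n]` in a poset `P`. Then the `φ_p`-standard neighborhood
`{x : s_{¬≤p}(x) ≤ φ_p(s_{¬<p}(x)) · s_p(x)}` is a neighborhood of the `p`-stratum of
the realized stratified simplex. -/
theorem phiStandardNhd_mem_nhdsSet {n : ℕ} {P : Type*} [PartialOrder P]
    (L : Fin (n + 1) → P) (hL : Monotone L) (p : P) (φ : ℝ → ℝ)
    (hφc : ContinuousOn φ (Set.Icc 0 1))
    (hφm : ∀ s ∈ Set.Icc (0 : ℝ) 1, φ s ∈ Set.Icc (0 : ℝ) 1)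
    (hφpos : ∀ s ∈ Set.Icc (0 : ℝ) 1, 0 < s → 0 < φ s) :
    {x : {x : Fin (n + 1) → ℝ // IsSimplexPt x} |
        sNotLe L p x.1 ≤ φ (sNotLt L p x.1) * sEq L p x.1} ∈
      nhdsSet {x : {x : Fin (n + 1) → ℝ // IsSimplexPt x} | stratOf L x.1 = p} :=
  phiStandardNhd_mem_nhdsSet_general L hL p φ hφc hφpos

end
end

section
/- Let U be a neighborhood of the p-stratum of a realized stratified simplex over a flag J in a poset P, where the p-stratum is nonempty. Then there exists a continuous function φ : [0,1] → [0,1] with φ(s) > 0 for s > 0 such that every point x of the simplex with s_{¬<p}(x) > 0 and s_{¬≤p}(x) ≤ φ(s_{¬<p}(x)) lies in U. -/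
noncomputable section
open Finset Classical

/-!
Let `V` be open with `stratum ⊆ V ⊆ U`. On the compact set `Vᶜ` the continuous map
`x ↦ (s_{¬<p}(x), s_{¬≤p}(x))` never takes a value `(t, 0)` with `t > 0`: such a point has all its
mass on labels `≤ p` and some mass on a label `= p`, so it lies in the `p`-stratum. Hence the
compact image `K` of `Vᶜ` avoids the open half-line `(0, ∞) × {0}`, and
`φ(t) = min 1 (dist((t, 0), K) / 2)` does the job.
-/

lemma exists_lt_abs_snd_of_isCompact {K : Set (ℝ × ℝ)} (hK : IsCompact K)
    (hK0 : ∀ t, 0 < t → (t, 0) ∉ K) :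
    ∃ φ : ℝ → ℝ, Continuous φ ∧ (∀ s, φ s ∈ Set.Icc (0 : ℝ) 1) ∧ (∀ s, 0 < s → 0 < φ s) ∧
      ∀ z ∈ K, 0 < z.1 → φ z.1 < |z.2| := by
  rcases K.eq_empty_or_nonempty with rfl | hKne
  · exact ⟨fun _ => 1, continuous_const, fun _ => ⟨zero_le_one, le_rfl⟩, fun _ _ => one_pos,
      fun _ h => h.elim⟩
  have hdist_pos : ∀ t, 0 < t → 0 < Metric.infDist (t, 0) K := fun t ht =>
    (hK.isClosed.notMem_iff_infDist_pos hKne).mp (hK0 t ht)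
  refine ⟨fun t => min 1 (Metric.infDist ((t, 0) : ℝ × ℝ) K / 2),
    continuous_const.min (((Metric.continuous_infDist_pt K).comp
      (Continuous.prodMk_left 0)).div_const 2),
    fun s => ⟨le_min zero_le_one (div_nonneg Metric.infDist_nonneg zero_le_two), min_le_left _ _⟩,
    fun s hs => lt_min one_pos (half_pos (hdist_pos s hs)), fun z hz hz1 => ?_⟩
  have hle : Metric.infDist ((z.1, 0) : ℝ × ℝ) K ≤ |z.2| := by
    simpa [Prod.dist_eq, Real.dist_eq] using Metric.infDist_le_dist_of_mem (x := (z.1, 0)) hz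
  have hpos := hdist_pos z.1 hz1
  exact (min_le_right _ _).trans_lt (by linarith)

section Simplex

variable {n : ℕ} {P : Type*} [PartialOrder P] (L : Fin (n + 1) → P) (p : P)

lemma continuous_sNotLe : Continuous (sNotLe L p) :=
  continuous_finsetSum _ fun i _ => continuous_apply i

lemma continuous_sNotLt : Continuous (sNotLt L p) :=
  continuous_finsetSum _ fun i _ => continuous_apply i

variable {L p} {x : Fin (n + 1) → ℝ}

lemma sNotLe_nonneg (hx : ∀ i, 0 ≤ x i) : 0 ≤ sNotLe L p x :=
  Finset.sum_nonneg fun i _ => hx i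

lemma label_le_of_sNotLe_eq_zero (hx : ∀ i, 0 ≤ x i) (h : sNotLe L p x = 0) {i : Fin (n + 1)}
    (hi : 0 < x i) : L i ≤ p := by
  by_contra hip
  have := (Finset.sum_eq_zero_iff_of_nonneg fun j _ => hx j).mp h i (by simp [hip])
  exact hi.ne' this

lemma exists_pos_not_label_lt_of_sNotLt_pos (h : 0 < sNotLt L p x) :
    ∃ i, ¬ L i < p ∧ 0 < x i := by
  obtain ⟨i, hi, hxi⟩ := Finset.exists_lt_of_sum_lt (f := fun _ => (0 : ℝ))
    (by simpa [sNotLt] using h)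
  exact ⟨i, (Finset.mem_filter.mp hi).2, hxi⟩

lemma stratOf_eq_of_sNotLe_eq_zero (hL : Monotone L) (hx : ∀ i, 0 ≤ x i)
    (hle : sNotLe L p x = 0) (hlt : 0 < sNotLt L p x) : stratOf L x = p := by
  obtain ⟨i, hnlt, hxi⟩ := exists_pos_not_label_lt_of_sNotLt_pos hlt
  have hLi : L i = p := (label_le_of_sNotLe_eq_zero hx hle hxi).eq_of_not_lt hnlt
  set T := Finset.univ.filter fun j => 0 < x j
  have hiT : i ∈ T := by simp [T, hxi]
  obtain ⟨m, hmT, hm⟩ := T.exists_mem_eq_sup ⟨i, hiT⟩ id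
  have him : i ≤ m := by simpa [hm] using Finset.le_sup (f := id) hiT
  show L (T.sup id) = p
  rw [hm]
  exact le_antisymm (label_le_of_sNotLe_eq_zero hx hle (Finset.mem_filter.mp hmT).2)
    (hLi ▸ hL him)

end Simplex

instance {n : ℕ} : CompactSpace {x : Fin (n + 1) → ℝ // IsSimplexPt x} :=
  isCompact_iff_compactSpace.mp (isCompact_stdSimplex ℝ (Fin (n + 1)))

theorem exists_phi_of_nhd_general {n : ℕ} {P : Type*} [PartialOrder P]
    (L : Fin (n + 1) → P) (hL : Monotone L) (p : P)
    (U : Set {x : Fin (n + 1) → ℝ // IsSimplexPt x})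
    (hU : U ∈ nhdsSet {x : {x : Fin (n + 1) → ℝ // IsSimplexPt x} | stratOf L x.1 = p}) :
    ∃ φ : ℝ → ℝ, ContinuousOn φ (Set.Icc 0 1) ∧
      (∀ s ∈ Set.Icc (0 : ℝ) 1, φ s ∈ Set.Icc (0 : ℝ) 1) ∧
      (∀ s ∈ Set.Icc (0 : ℝ) 1, 0 < s → 0 < φ s) ∧
      ∀ x : {x : Fin (n + 1) → ℝ // IsSimplexPt x},
        0 < sNotLt L p x.1 → sNotLe L p x.1 ≤ φ (sNotLt L p x.1) → x ∈ U := by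
  obtain ⟨V, hVopen, hSV, hVU⟩ := mem_nhdsSet_iff_exists.mp hU
  set Φ := fun x : {x : Fin (n + 1) → ℝ // IsSimplexPt x} => (sNotLt L p x.1, sNotLe L p x.1)
  have hΦ : Continuous Φ := ((continuous_sNotLt L p).prodMk (continuous_sNotLe L p)).comp
    continuous_subtype_val
  have hK0 : ∀ t, 0 < t → (t, 0) ∉ Φ '' Vᶜ := by
    rintro t ht ⟨x, hxV, hx⟩
    simp only [Φ, Prod.mk.injEq] at hx
    exact hxV (hSV (stratOf_eq_of_sNotLe_eq_zero hL x.2.1 hx.2 (hx.1 ▸ ht)))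
  obtain ⟨φ, hφ, hφ01, hφpos, hφK⟩ :=
    exists_lt_abs_snd_of_isCompact (hVopen.isClosed_compl.isCompact.image hΦ) hK0
  refine ⟨φ, hφ.continuousOn, fun s _ => hφ01 s, fun s _ => hφpos s, fun x hlt hle => ?_⟩
  by_contra hxU
  have := hφK (Φ x) ⟨x, fun hxV => hxU (hVU hxV), rfl⟩ hlt
  rw [abs_of_nonneg (sNotLe_nonneg x.2.1)] at this
  exact (this.trans_le hle).false

/-- If `U` is a neighborhood of the (nonempty) `p`-stratum of a realized stratified
simplex over a flag in a poset `P`, then there is a continuous `φ : [0,1] → [0,1]` with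
`φ(s) > 0` for `s > 0`, such that every point `x` of the simplex with
`s_{¬<p}(x) > 0` and `s_{¬≤p}(x) ≤ φ(s_{¬<p}(x))` lies in `U`. -/
theorem exists_phi_of_nhd {n : ℕ} {P : Type*} [PartialOrder P]
    (L : Fin (n + 1) → P) (hL : Monotone L) (p : P)
    (hne : {x : {x : Fin (n + 1) → ℝ // IsSimplexPt x} | stratOf L x.1 = p}.Nonempty)
    (U : Set {x : Fin (n + 1) → ℝ // IsSimplexPt x})
    (hU : U ∈ nhdsSet {x : {x : Fin (n + 1) → ℝ // IsSimplexPt x} | stratOf L x.1 = p}) :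
    ∃ φ : ℝ → ℝ, ContinuousOn φ (Set.Icc 0 1) ∧
      (∀ s ∈ Set.Icc (0 : ℝ) 1, φ s ∈ Set.Icc (0 : ℝ) 1) ∧
      (∀ s ∈ Set.Icc (0 : ℝ) 1, 0 < s → 0 < φ s) ∧
      ∀ x : {x : Fin (n + 1) → ℝ // IsSimplexPt x},
        0 < sNotLt L p x.1 → sNotLe L p x.1 ≤ φ (sNotLt L p x.1) → x ∈ U :=
  exists_phi_of_nhd_general L hL p U hU

end
end

section
/- Let x be in the realized stratified simplex over a flag J in a poset P, let q ≤ p in P, and suppose x satisfies both standard-neighborhood conditions s_{¬≤q}(x) ≤ s_q(x) and s_{¬≤p}(x) ≤ s_p(x). Then the retracted point ρᵖ(x) (rescaling of the coordinates at labels ≤ p, which is well-defined since s_{≤p}(x) ≥ 1/2) again satisfies s_{¬≤q}(ρᵖ(x)) ≤ s_q(ρᵖ(x)). -/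
noncomputable section
open Finset Classical

/-- The retraction `ρᵖ` onto the face of labels `≤ p`: rescale the coordinates at
vertices with label `≤ p` by `1 / s_{≤p}(x)` and set all other coordinates to `0`. -/
def rho {n : ℕ} {P : Type*} [PartialOrder P] (L : Fin (n + 1) → P) (p : P)
    (x : Fin (n + 1) → ℝ) : Fin (n + 1) → ℝ :=
  fun i => if L i ≤ p then x i / sLe L p x else 0

section Retraction

variable {n : ℕ} {P : Type*} [PartialOrder P] (L : Fin (n + 1) → P)

theorem sLe_add_sNotLe (p : P) (x : Fin (n + 1) → ℝ) :
    sLe L p x + sNotLe L p x = ∑ i, x i :=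
  Finset.sum_filter_add_sum_filter_not _ _ _

theorem sLe_nonneg {x : Fin (n + 1) → ℝ} (hx0 : ∀ i, 0 ≤ x i) (p : P) : 0 ≤ sLe L p x :=
  Finset.sum_nonneg fun i _ => hx0 i

theorem sEq_le_sLe {x : Fin (n + 1) → ℝ} (hx0 : ∀ i, 0 ≤ x i) (p : P) : sEq L p x ≤ sLe L p x :=
  Finset.sum_le_sum_of_subset_of_nonneg
    (Finset.monotone_filter_right _ fun _ _ => le_of_eq) fun i _ _ => hx0 i

theorem one_half_le_sLe {p : P} {x : Fin (n + 1) → ℝ} (hx : IsSimplexPt x) (hp : sNotLe L p x ≤ sEq L p x) :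
    1 / 2 ≤ sLe L p x := by
  have htotal := sLe_add_sNotLe L p x
  have hEq := sEq_le_sLe L hx.1 p
  rw [hx.2] at htotal
  linarith

theorem sEq_rho {p q : P} (hqp : q ≤ p) (x : Fin (n + 1) → ℝ) :
    sEq L q (rho L p x) = sEq L q x / sLe L p x := by
  rw [sEq, sEq, Finset.sum_div]
  refine Finset.sum_congr rfl fun i hi => ?_
  rw [Finset.mem_filter] at hi
  simp [rho, hi.2.le.trans hqp]

theorem sNotLe_rho_le {x : Fin (n + 1) → ℝ} (hx0 : ∀ i, 0 ≤ x i) (p q : P) :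
    sNotLe L q (rho L p x) ≤ sNotLe L q x / sLe L p x := by
  rw [sNotLe, sNotLe, Finset.sum_div]
  refine Finset.sum_le_sum fun i _ => ?_
  by_cases h : L i ≤ p
  · simp [rho, h]
  · simpa [rho, h] using div_nonneg (hx0 i) (sLe_nonneg L hx0 p)

end Retraction

theorem rho_preserves_standardNhd_general {n : ℕ} {P : Type*} [PartialOrder P]
    (L : Fin (n + 1) → P) (p q : P) (hqp : q ≤ p)
    (x : Fin (n + 1) → ℝ) (hx : IsSimplexPt x)
    (hq : sNotLe L q x ≤ sEq L q x) (hp : sNotLe L p x ≤ sEq L p x) :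
    sNotLe L q (rho L p x) ≤ sEq L q (rho L p x) := by
  have hs : 0 < sLe L p x := by linarith [one_half_le_sLe L hx hp]
  calc sNotLe L q (rho L p x)
      ≤ sNotLe L q x / sLe L p x := sNotLe_rho_le L hx.1 p q
    _ ≤ sEq L q x / sLe L p x := by gcongr
    _ = sEq L q (rho L p x) := (sEq_rho L hqp x).symm

/-- Let `x` be in the realized stratified simplex over a flag `L`, let `q ≤ p`, and
suppose `x` satisfies the standard-neighborhood conditions `s_{¬≤q}(x) ≤ s_q(x)` and
`s_{¬≤p}(x) ≤ s_p(x)`. Then the retracted point `ρᵖ(x)` again satisfies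
`s_{¬≤q}(ρᵖ(x)) ≤ s_q(ρᵖ(x))`. -/
theorem rho_preserves_standardNhd {n : ℕ} {P : Type*} [PartialOrder P]
    (L : Fin (n + 1) → P) (hL : Monotone L) (p q : P) (hqp : q ≤ p)
    (x : Fin (n + 1) → ℝ) (hx : IsSimplexPt x)
    (hq : sNotLe L q x ≤ sEq L q x) (hp : sNotLe L p x ≤ sEq L p x) :
    sNotLe L q (rho L p x) ≤ sEq L q (rho L p x) :=
  rho_preserves_standardNhd_general L p q hqp x hx hq hp

end
end
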